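/- If a bipartition μ is obtained from λ by removing one box, then k(μ) ≤ k(λ), and moreover either k(μ) = k(λ) or k(μ) = k(λ) − 1, where k is the defect-plus-rank statistic on weight diagrams. -/
import Mathlib


open scoped Classical

/-- Labels of the vertices of a weight diagram. -/
inductive WLabel : Type
  | o | up | down | x
deriving DecidableEq

/-- A partition given by its weakly decreasing, eventually zero sequence of
parts (`0`-indexed: `f j` is the part `λ_{j+1}`). -/
def IsPartitionFun (f : ℕ → ℕ) : Prop :=
  (∀ i j : ℕ, i ≤ j → f j ≤ f i) ∧ ∃ N, ∀ i, N ≤ i → f i = 0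

/-- `p ∈ I_∧(λ) = {λ^L_1, λ^L_2 − 1, λ^L_3 − 2, …}`. -/
def inWedgeSet (f : ℕ → ℕ) (p : ℤ) : Prop := ∃ j : ℕ, p = (f j : ℤ) - j

/-- `p ∈ I_∨(λ) = {1 − δ − λ^R_1, 2 − δ − λ^R_2, …}`. -/
def inVeeSet (g : ℕ → ℕ) (δ : ℤ) (p : ℤ) : Prop :=
  ∃ j : ℕ, p = (j : ℤ) + 1 - δ - (g j : ℤ)

/-- The label of the vertex `p` of the weight diagram associated to the
bipartition `λ = (f, g)` with parameter `δ`: `∘` if `p` is in neither `I_∧(λ)`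
nor `I_∨(λ)`, `∧` if only in `I_∧(λ)`, `∨` if only in `I_∨(λ)`, `×` if in
both. -/
noncomputable def weightLabel (f g : ℕ → ℕ) (δ : ℤ) (p : ℤ) : WLabel :=
  if inWedgeSet f p then (if inVeeSet g δ p then .x else .up)
  else (if inVeeSet g δ p then .down else .o)

/-- `(p, q)` is a matched `∨∧`-pair of the weight diagram `w`, i.e. the two
endpoints of a cup of the cup diagram (equivalently a cap of the cap diagram):
nested bracket matching with `∨` as opening and `∧` as closing bracket. -/
def MatchedPair (w : ℤ → WLabel) (p q : ℤ) : Prop :=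
  p < q ∧ w p = .down ∧ w q = .up ∧
  (Nat.card {x : ℤ | x ∈ Set.Ioo p q ∧ w x = .down}
    = Nat.card {x : ℤ | x ∈ Set.Ioo p q ∧ w x = .up}) ∧
  ∀ y ∈ Set.Ioo p q,
    Nat.card {x : ℤ | x ∈ Set.Ioc p y ∧ w x = .up}
      ≤ Nat.card {x : ℤ | x ∈ Set.Ioc p y ∧ w x = .down}

/-- The defect of a weight diagram: the number of caps in its cap diagram,
i.e. the number of matched `∨∧`-pairs. -/
noncomputable def defectW (w : ℤ → WLabel) : ℕ :=
  Nat.card {pq : ℤ × ℤ // MatchedPair w pq.1 pq.2}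

/-- The rank of a weight diagram: the smaller of the number of `∘`'s and the
number of `×`'s. -/
noncomputable def rkW (w : ℤ → WLabel) : ℕ :=
  min (Nat.card {p : ℤ // w p = .o}) (Nat.card {p : ℤ // w p = .x})

/-- `k(λ) = def(λ) + rk(λ)`. -/
noncomputable def kW (w : ℤ → WLabel) : ℕ := defectW w + rkW w

/-- `f'` is obtained from `f` by removing one box (decreasing one part by 1). -/
def RemovesBox (f f' : ℕ → ℕ) : Prop :=
  ∃ j : ℕ, f' j + 1 = f j ∧ ∀ i : ℕ, i ≠ j → f' i = f i

namespace KRB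
open WLabel

def eps : WLabel → ℤ
  | .down => 1
  | .up => -1
  | _ => 0

noncomputable def Ew (w : ℤ → WLabel) (p q : ℤ) : ℤ := ∑ x ∈ Finset.Ico p q, eps (w x)

lemma Ew_split (w : ℤ → WLabel) {p r q : ℤ} (h1 : p ≤ r) (h2 : r ≤ q) :
    Ew w p q = Ew w p r + Ew w r q := by
  unfold Ew
  rw [← Finset.Ico_union_Ico_eq_Ico h1 h2, Finset.sum_union (Finset.Ico_disjoint_Ico_consecutive p r q)]

lemma Ew_single (w : ℤ → WLabel) (p : ℤ) : Ew w p (p+1) = eps (w p) := by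
  unfold Ew
  have : Finset.Ico p (p+1) = {p} := by ext x; simp; omega
  rw [this, Finset.sum_singleton]

lemma Ew_self (w : ℤ → WLabel) (p : ℤ) : Ew w p p = 0 := by
  unfold Ew; simp

lemma Ew_succ_left (w : ℤ → WLabel) {p q : ℤ} (h : p < q) :
    Ew w p q = eps (w p) + Ew w (p+1) q := by
  rw [Ew_split w (by omega : p ≤ p+1) (by omega : p+1 ≤ q), Ew_single]

lemma Ew_succ_right (w : ℤ → WLabel) {p q : ℤ} (h : p ≤ q) :
    Ew w p (q+1) = Ew w p q + eps (w q) := by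
  rw [Ew_split w h (by omega : q ≤ q+1), Ew_single]

lemma eps_eq (l : WLabel) :
    eps l = (if l = .down then (1:ℤ) else 0) - (if l = .up then (1:ℤ) else 0) := by
  cases l <;> simp [eps]

lemma Ew_eq_sub (w : ℤ → WLabel) (p q : ℤ) :
    Ew w p q = ((Finset.Ico p q).filter (fun x => w x = .down)).card
      - ((Finset.Ico p q).filter (fun x => w x = .up)).card := by
  unfold Ew
  rw [Finset.sum_congr rfl (fun x _ => eps_eq (w x)), Finset.sum_sub_distrib]
  simp [Finset.sum_boole]

lemma natCard_filter (s : Finset ℤ) (P : ℤ → Prop) [DecidablePred P] :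
    Nat.card {x : ℤ | x ∈ (s : Set ℤ) ∧ P x} = (s.filter P).card := by
  have h : {x : ℤ | x ∈ (s : Set ℤ) ∧ P x} = ↑(s.filter P) := by ext x; simp
  rw [h, Nat.card_coe_set_eq, Set.ncard_coe_finset]

lemma Ioo_eq (p q : ℤ) : Finset.Ioo p q = Finset.Ico (p+1) q := by
  ext x; simp [Finset.mem_Ioo, Finset.mem_Ico]

lemma Ioc_eq (p q : ℤ) : Finset.Ioc p q = Finset.Ico (p+1) (q+1) := by
  ext x; simp [Finset.mem_Ioc, Finset.mem_Ico]

lemma MP_iff (w : ℤ → WLabel) (p q : ℤ) :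
    MatchedPair w p q ↔ p < q ∧ w p = .down ∧ w q = .up ∧ Ew w (p+1) q = 0 ∧
      ∀ y, p < y → y < q → 0 ≤ Ew w (p+1) (y+1) := by
  have key : ∀ a b : ℤ, Nat.card {x : ℤ | x ∈ Set.Ioo a b ∧ w x = .down}
      = ((Finset.Ico (a+1) b).filter (fun x => w x = .down)).card := by
    intro a b
    rw [← Finset.coe_Ioo, natCard_filter, Ioo_eq]
  have key2 : ∀ a b : ℤ, Nat.card {x : ℤ | x ∈ Set.Ioo a b ∧ w x = .up}
      = ((Finset.Ico (a+1) b).filter (fun x => w x = .up)).card := by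
    intro a b
    rw [← Finset.coe_Ioo, natCard_filter, Ioo_eq]
  have key3 : ∀ a b : ℤ, Nat.card {x : ℤ | x ∈ Set.Ioc a b ∧ w x = .down}
      = ((Finset.Ico (a+1) (b+1)).filter (fun x => w x = .down)).card := by
    intro a b
    rw [← Finset.coe_Ioc, natCard_filter, Ioc_eq]
  have key4 : ∀ a b : ℤ, Nat.card {x : ℤ | x ∈ Set.Ioc a b ∧ w x = .up}
      = ((Finset.Ico (a+1) (b+1)).filter (fun x => w x = .up)).card := by
    intro a b
    rw [← Finset.coe_Ioc, natCard_filter, Ioc_eq]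
  unfold MatchedPair
  constructor
  · rintro ⟨h1, h2, h3, h4, h5⟩
    refine ⟨h1, h2, h3, ?_, ?_⟩
    · rw [key, key2] at h4
      have := Ew_eq_sub w (p+1) q
      omega
    · intro y hy1 hy2
      have := h5 y (Set.mem_Ioo.mpr ⟨hy1, hy2⟩)
      rw [key3, key4] at this
      have h6 := Ew_eq_sub w (p+1) (y+1)
      omega
  · rintro ⟨h1, h2, h3, h4, h5⟩
    refine ⟨h1, h2, h3, ?_, ?_⟩
    · rw [key, key2]
      have := Ew_eq_sub w (p+1) q
      omega
    · intro y hy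
      rw [Set.mem_Ioo] at hy
      have := h5 y hy.1 hy.2
      rw [key3, key4]
      have h6 := Ew_eq_sub w (p+1) (y+1)
      omega

def Matched (w : ℤ → WLabel) (q : ℤ) : Prop :=
  w q = .up ∧ ∃ p, p < q ∧ 1 ≤ Ew w p q

lemma matched_of_pair {w : ℤ → WLabel} {p q : ℤ} (h : MatchedPair w p q) : Matched w q := by
  rw [MP_iff] at h
  obtain ⟨h1, h2, h3, h4, h5⟩ := h
  refine ⟨h3, p, h1, ?_⟩
  rw [Ew_succ_left w h1, h2]
  simp [eps, h4]

lemma pair_of_matched {w : ℤ → WLabel} {q : ℤ} (h : Matched w q) :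
    ∃ p, MatchedPair w p q := by
  obtain ⟨hup, p0, hp0, hE⟩ := h
  obtain ⟨p, ⟨hplt, hpE⟩, hmax⟩ := Int.exists_greatest_of_bdd
    (P := fun p => p < q ∧ 1 ≤ Ew w p q) ⟨q, fun z hz => le_of_lt hz.1⟩ ⟨p0, hp0, hE⟩
  have h1 : Ew w (p+1) q ≤ 0 := by
    rcases eq_or_lt_of_le (by omega : p + 1 ≤ q) with h | h
    · rw [← h, Ew_self]
    · by_contra hc
      have := hmax (p+1) ⟨h, by omega⟩
      omega
  have hsucc := Ew_succ_left w hplt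
  have hwp : w p = .down := by
    cases hh : w p <;> rw [hh] at hsucc <;> simp [eps] at hsucc <;> first
      | omega
      | rfl
  rw [hwp] at hsucc; simp [eps] at hsucc
  have hbal : Ew w (p+1) q = 0 := by omega
  refine ⟨p, (MP_iff w p q).mpr ⟨hplt, hwp, hup, hbal, ?_⟩⟩
  intro y hy1 hy2
  by_contra hc
  push_neg at hc
  have hsp : Ew w (p+1) q = Ew w (p+1) (y+1) + Ew w (y+1) q :=
    Ew_split w (by omega) (by omega)
  have h2 : 1 ≤ Ew w (y+1) q := by omega
  have h3 : y + 1 < q := by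
    rcases eq_or_lt_of_le (by omega : y + 1 ≤ q) with h | h
    · rw [← h] at h2; rw [Ew_self] at h2; omega
    · exact h
  have := hmax (y+1) ⟨h3, h2⟩
  omega

lemma MP_unique_aux {w : ℤ → WLabel} {p p' q : ℤ} (hlt : p < p')
    (h : MatchedPair w p q) (h' : MatchedPair w p' q) : False := by
  rw [MP_iff] at h h'
  obtain ⟨h1, h2, h3, h4, h5⟩ := h
  obtain ⟨h1', h2', h3', h4', h5'⟩ := h'
  have hsp : Ew w (p+1) q = Ew w (p+1) (p'+1) + Ew w (p'+1) q :=
    Ew_split w (by omega) (by omega)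
  have hb : Ew w (p+1) (p'+1) = 0 := by omega
  have hs : Ew w (p+1) (p'+1) = Ew w (p+1) p' + eps (w p') := Ew_succ_right w (by omega)
  rw [h2'] at hs; simp [eps] at hs
  have hneg : Ew w (p+1) p' = -1 := by omega
  rcases eq_or_lt_of_le (by omega : p + 1 ≤ p') with h | h
  · rw [← h, Ew_self] at hneg; omega
  · have := h5 (p'-1) (by omega) (by omega)
    have he : p' - 1 + 1 = p' := by omega
    rw [he] at this
    omega

lemma MP_unique {w : ℤ → WLabel} {p p' q : ℤ}
    (h : MatchedPair w p q) (h' : MatchedPair w p' q) : p = p' := by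
  rcases lt_trichotomy p p' with hh | hh | hh
  · exact (MP_unique_aux hh h h').elim
  · exact hh
  · exact (MP_unique_aux hh h' h).elim

lemma defect_eq (w : ℤ → WLabel) : defectW w = Nat.card {q : ℤ // Matched w q} := by
  apply Nat.card_congr
  refine ⟨fun x => ⟨x.1.2, matched_of_pair x.2⟩,
    fun x => ⟨((pair_of_matched x.2).choose, x.1), (pair_of_matched x.2).choose_spec⟩,
    ?_, ?_⟩
  · rintro ⟨⟨p, q⟩, h⟩
    have := MP_unique (pair_of_matched (matched_of_pair h)).choose_spec h
    simp [this]
  · rintro ⟨q, h⟩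
    rfl

section Moves

variable {w w' : ℤ → WLabel} {i : ℤ}

lemma Ew_move (hout : ∀ x, x ≠ i → x ≠ i + 1 → w' x = w x)
    (hei : eps (w' i) = eps (w i) - 1) (hei1 : eps (w' (i+1)) = eps (w (i+1)) + 1) :
    ∀ p q : ℤ, p ≤ q → Ew w' p q
      = Ew w p q + (if p = i+1 then 1 else 0) - (if q = i+1 then 1 else 0) := by
  intro p q hpq
  have hdiff : Ew w' p q - Ew w p q
      = ∑ x ∈ Finset.Ico p q, (eps (w' x) - eps (w x)) := by
    unfold Ew; rw [Finset.sum_sub_distrib]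
  have hptw : ∀ x, eps (w' x) - eps (w x)
      = (if x = i then (-1:ℤ) else 0) + (if x = i+1 then (1:ℤ) else 0) := by
    intro x
    by_cases h1 : x = i
    · subst h1; rw [if_pos rfl, if_neg (by omega)]; omega
    · by_cases h2 : x = i+1
      · subst h2; rw [if_neg h1, if_pos rfl]; omega
      · rw [hout x h1 h2, if_neg h1, if_neg h2]; omega
  rw [Finset.sum_congr rfl (fun x _ => hptw x), Finset.sum_add_distrib,
    Finset.sum_ite_eq' _ i (fun _ => (-1:ℤ)), Finset.sum_ite_eq' _ (i+1) (fun _ => (1:ℤ))]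
    at hdiff
  simp only [Finset.mem_Ico] at hdiff
  split_ifs at hdiff ⊢ <;> omega

variable (hmv : ∀ p q : ℤ, p ≤ q → Ew w' p q
      = Ew w p q + (if p = i+1 then 1 else 0) - (if q = i+1 then 1 else 0))

include hmv

lemma exA {q : ℤ} (hq : q ≠ i+1) (h : ∃ p, p < q ∧ 1 ≤ Ew w p q) :
    ∃ p, p < q ∧ 1 ≤ Ew w' p q := by
  obtain ⟨p, hlt, hE⟩ := h
  refine ⟨p, hlt, ?_⟩
  have := hmv p q (le_of_lt hlt)
  split_ifs at this <;> omega

lemma exB (hdown : w i = .down) {q : ℤ} (hq : q ≠ i+1)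
    (h : ∃ p, p < q ∧ 1 ≤ Ew w' p q) : ∃ p, p < q ∧ 1 ≤ Ew w p q := by
  obtain ⟨p, hlt, hE⟩ := h
  have hm := hmv p q (le_of_lt hlt)
  by_cases hp : p = i+1
  · subst hp
    have h0 : 0 ≤ Ew w (i+1) q := by split_ifs at hm <;> omega
    refine ⟨i, by omega, ?_⟩
    have h1 : Ew w i q = eps (w i) + Ew w (i+1) q := Ew_succ_left w (by omega)
    rw [hdown] at h1; simp [eps] at h1; omega
  · exact ⟨p, hlt, by split_ifs at hm <;> omega⟩

lemma exB' (hup1 : w (i+1) = .up) (heps1 : eps (w' (i+1)) = 0) {q : ℤ} (hq : q ≠ i+1)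
    (h : ∃ p, p < q ∧ 1 ≤ Ew w' p q) : ∃ p, p < q ∧ 1 ≤ Ew w p q := by
  obtain ⟨p, hlt, hE⟩ := h
  have hm := hmv p q (le_of_lt hlt)
  by_cases hp : p = i+1
  · subst hp
    have h0 : 0 ≤ Ew w (i+1) q := by split_ifs at hm <;> omega
    have hq2 : q ≠ i+2 := by
      intro h2; subst h2
      have hm2 := hmv (i+1) (i+2) (by omega)
      have e1 : Ew w (i+1) (i+2) = eps (w (i+1)) := by
        have := Ew_single w (i+1); rwa [show i+1+1 = i+2 by ring] at this
      rw [hup1] at e1; simp [eps] at e1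
      split_ifs at hm2 <;> omega
    have hlt2 : i + 2 < q := by omega
    refine ⟨i+2, hlt2, ?_⟩
    have hs : Ew w (i+1) q = eps (w (i+1)) + Ew w (i+2) q := by
      have := Ew_succ_left w (show i+1 < q by omega)
      rwa [show i+1+1 = i+2 by ring] at this
    rw [hup1] at hs; simp [eps] at hs; omega
  · exact ⟨p, hlt, by split_ifs at hm <;> omega⟩

omit hmv

lemma matched_mem {L R : ℤ} (hL : ∀ x, x < L → w x = .up) (hR : ∀ x, R < x → w x = .down)
    {q : ℤ} (h : Matched w q) : q ∈ Set.Ioc L R := by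
  obtain ⟨hup, p, hlt, hE⟩ := h
  constructor
  · -- there is a down strictly below q
    have hsub := Ew_eq_sub w p q
    have hcd : 1 ≤ ((Finset.Ico p q).filter (fun x => w x = .down)).card := by omega
    obtain ⟨x, hx⟩ := Finset.card_pos.mp
      (show 0 < ((Finset.Ico p q).filter (fun x => w x = WLabel.down)).card by omega)
    rw [Finset.mem_filter, Finset.mem_Ico] at hx
    by_contra hc
    push_neg at hc
    have : x < L := by omega
    rw [hL x this] at hx
    simp at hx
  · by_contra hc
    push_neg at hc
    rw [hR q hc] at hup
    simp at hup

lemma matched_finite {L R : ℤ} (hL : ∀ x, x < L → w x = .up)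
    (hR : ∀ x, R < x → w x = .down) : (setOf (Matched w)).Finite :=
  (Set.finite_Ioc L R).subset (fun _ hq => matched_mem hL hR hq)

lemma label_finite {L R : ℤ} (hL : ∀ x, x < L → w x = .up) (hR : ∀ x, R < x → w x = .down)
    {l : WLabel} (hl1 : l ≠ .up) (hl2 : l ≠ .down) : {p : ℤ | w p = l}.Finite := by
  refine (Set.finite_Icc L R).subset (fun x hx => ?_)
  simp only [Set.mem_setOf_eq] at hx
  constructor
  · by_contra hc; push_neg at hc
    rw [hL x (by omega)] at hx; exact hl1 hx.symm
  · by_contra hc; push_neg at hc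
    rw [hR x (by omega)] at hx; exact hl2 hx.symm

lemma defect_eq' (w : ℤ → WLabel) : defectW w = (setOf (Matched w)).ncard := by
  rw [defect_eq]; exact Nat.card_coe_set_eq _

lemma rkW_eq (w : ℤ → WLabel) :
    rkW w = min ({p : ℤ | w p = .o}).ncard ({p : ℤ | w p = .x}).ncard := by
  unfold rkW
  have h1 : Nat.card {p : ℤ // w p = WLabel.o} = ({p : ℤ | w p = WLabel.o}).ncard :=
    Nat.card_coe_set_eq _
  have h2 : Nat.card {p : ℤ // w p = WLabel.x} = ({p : ℤ | w p = WLabel.x}).ncard :=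
    Nat.card_coe_set_eq _
  rw [h1, h2]

lemma card_label_congr (σ : ℤ ≃ ℤ) (hptw : ∀ x, w' x = w (σ x)) (l : WLabel) :
    Nat.card {p : ℤ // w' p = l} = Nat.card {p : ℤ // w p = l} :=
  Nat.card_congr (Equiv.subtypeEquiv σ (fun x => by rw [hptw]))

lemma kW_transparent (hptw : ∀ x, w' x = w ((Equiv.swap i (i+1)) x))
    (hiff : ∀ q, Matched w' q ↔ Matched w ((Equiv.swap i (i+1)) q)) : kW w' = kW w := by
  have hd : defectW w' = defectW w := by
    rw [defect_eq, defect_eq]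
    exact Nat.card_congr (Equiv.subtypeEquiv (Equiv.swap i (i+1)) hiff)
  have hr : rkW w' = rkW w := by
    unfold rkW
    rw [card_label_congr (Equiv.swap i (i+1)) hptw, card_label_congr (Equiv.swap i (i+1)) hptw]
  unfold kW; omega

lemma kW_T1 (hout : ∀ x, x ≠ i → x ≠ i+1 → w' x = w x)
    (hox : w i = .o ∨ w i = .x) (hup1 : w (i+1) = .up)
    (h'1 : w' i = .up) (h'2 : w' (i+1) = w i) : kW w' = kW w := by
  have hepsi : eps (w i) = 0 := by rcases hox with h | h <;> simp [h, eps]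
  have hmv := Ew_move hout (by rw [h'1, hepsi]; simp [eps])
    (by rw [h'2, hup1, hepsi]; simp [eps])
  have key : ∀ p, p < i → Ew w' p i = Ew w p i := by
    intro p hp
    have := hmv p i (le_of_lt hp)
    split_ifs at this <;> omega
  have key2 : ∀ p, p ≤ i → Ew w p (i+1) = Ew w p i := by
    intro p hp
    rw [Ew_succ_right w hp, hepsi, add_zero]
  have hiff : ∀ q, Matched w' q ↔ Matched w ((Equiv.swap i (i+1)) q) := by
    intro q
    by_cases hq1 : q = i
    · subst hq1
      rw [Equiv.swap_apply_left]
      constructor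
      · rintro ⟨_, p, hp, hE⟩
        refine ⟨hup1, p, by omega, ?_⟩
        rw [key2 p (by omega), ← key p hp]
        exact hE
      · rintro ⟨_, p, hp, hE⟩
        rcases eq_or_lt_of_le (show p ≤ q by omega) with he | hlt2
        · exfalso
          rw [he, Ew_single w q, hepsi] at hE
          omega
        · refine ⟨h'1, p, hlt2, ?_⟩
          rw [key p hlt2, ← key2 p (le_of_lt hlt2)]
          exact hE
    · by_cases hq2 : q = i+1
      · subst hq2
        rw [Equiv.swap_apply_right]
        constructor
        · rintro ⟨h1, _⟩
          rw [h'2] at h1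
          rcases hox with h | h <;> rw [h] at h1 <;> simp at h1
        · rintro ⟨h1, _⟩
          rcases hox with h | h <;> rw [h] at h1 <;> simp at h1
      · rw [Equiv.swap_apply_of_ne_of_ne hq1 hq2]
        have hup_eq : w' q = w q := hout q hq1 hq2
        constructor
        · rintro ⟨h1, hex⟩
          exact ⟨by rw [← hup_eq]; exact h1,
            exB' hmv hup1 (by rw [h'2]; exact hepsi) hq2 hex⟩
        · rintro ⟨h1, hex⟩
          exact ⟨by rw [hup_eq]; exact h1, exA hmv hq2 hex⟩
  have hptw : ∀ x, w' x = w ((Equiv.swap i (i+1)) x) := by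
    intro x
    by_cases hx1 : x = i
    · subst hx1; rw [Equiv.swap_apply_left, h'1, hup1]
    · by_cases hx2 : x = i+1
      · subst hx2; rw [Equiv.swap_apply_right, h'2]
      · rw [Equiv.swap_apply_of_ne_of_ne hx1 hx2]; exact hout x hx1 hx2
  exact kW_transparent hptw hiff

lemma kW_T2 (hout : ∀ x, x ≠ i → x ≠ i+1 → w' x = w x)
    (hdown : w i = .down) (hox1 : w (i+1) = .o ∨ w (i+1) = .x)
    (h'1 : w' i = w (i+1)) (h'2 : w' (i+1) = .down) : kW w' = kW w := by
  have hepsi1 : eps (w (i+1)) = 0 := by rcases hox1 with h | h <;> simp [h, eps]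
  have hmv := Ew_move hout (by rw [h'1, hepsi1, hdown]; simp [eps])
    (by rw [h'2, hepsi1]; simp [eps])
  have hiff : ∀ q, Matched w' q ↔ Matched w q := by
    intro q
    by_cases hq1 : q = i
    · subst hq1
      constructor
      · rintro ⟨h1, _⟩
        rw [h'1] at h1
        rcases hox1 with h | h <;> rw [h] at h1 <;> simp at h1
      · rintro ⟨h1, _⟩; rw [hdown] at h1; simp at h1
    · by_cases hq2 : q = i+1
      · subst hq2
        constructor
        · rintro ⟨h1, _⟩; rw [h'2] at h1; simp at h1
        · rintro ⟨h1, _⟩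
          rcases hox1 with h | h <;> rw [h] at h1 <;> simp at h1
      · have hup_eq := hout q hq1 hq2
        constructor
        · rintro ⟨h1, hex⟩
          exact ⟨by rw [← hup_eq]; exact h1, exB hmv hdown hq2 hex⟩
        · rintro ⟨h1, hex⟩
          exact ⟨by rw [hup_eq]; exact h1, exA hmv hq2 hex⟩
  have hptw : ∀ x, w' x = w ((Equiv.swap i (i+1)) x) := by
    intro x
    by_cases hx1 : x = i
    · subst hx1; rw [Equiv.swap_apply_left, h'1]
    · by_cases hx2 : x = i+1
      · subst hx2; rw [Equiv.swap_apply_right, h'2, hdown]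
      · rw [Equiv.swap_apply_of_ne_of_ne hx1 hx2]; exact hout x hx1 hx2
  have hd : defectW w' = defectW w := by
    rw [defect_eq', defect_eq']
    congr 1
    ext q
    exact hiff q
  have hr : rkW w' = rkW w := by
    unfold rkW
    rw [card_label_congr (Equiv.swap i (i+1)) hptw WLabel.o,
      card_label_congr (Equiv.swap i (i+1)) hptw WLabel.x]
  unfold kW; omega

lemma kW_T4 {L R : ℤ} (hout : ∀ x, x ≠ i → x ≠ i+1 → w' x = w x)
    (hL : ∀ x, x < L → w x = .up) (hR : ∀ x, R < x → w x = .down)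
    (hdown : w i = .down) (hup1 : w (i+1) = .up)
    (hvar : (w' i = .o ∧ w' (i+1) = .x) ∨ (w' i = .x ∧ w' (i+1) = .o)) : kW w' = kW w := by
  have hepsi' : eps (w' i) = 0 := by rcases hvar with ⟨h, _⟩ | ⟨h, _⟩ <;> simp [h, eps]
  have hepsi1' : eps (w' (i+1)) = 0 := by rcases hvar with ⟨_, h⟩ | ⟨_, h⟩ <;> simp [h, eps]
  have hmv := Ew_move hout (by rw [hepsi', hdown]; simp [eps])
    (by rw [hepsi1', hup1]; simp [eps])
  have hiff : ∀ q, Matched w' q ↔ (Matched w q ∧ q ≠ i+1) := by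
    intro q
    by_cases hq1 : q = i
    · subst hq1
      constructor
      · rintro ⟨h1, _⟩
        rcases hvar with ⟨h, _⟩ | ⟨h, _⟩ <;> rw [h] at h1 <;> simp at h1
      · rintro ⟨⟨h1, _⟩, _⟩; rw [hdown] at h1; simp at h1
    · by_cases hq2 : q = i+1
      · subst hq2
        constructor
        · rintro ⟨h1, _⟩
          rcases hvar with ⟨_, h⟩ | ⟨_, h⟩ <;> rw [h] at h1 <;> simp at h1
        · rintro ⟨_, h⟩; exact absurd rfl h
      · have hup_eq := hout q hq1 hq2
        constructor
        · rintro ⟨h1, hex⟩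
          exact ⟨⟨by rw [← hup_eq]; exact h1, exB hmv hdown hq2 hex⟩, hq2⟩
        · rintro ⟨⟨h1, hex⟩, _⟩
          exact ⟨by rw [hup_eq]; exact h1, exA hmv hq2 hex⟩
  have hm1 : Matched w (i+1) := by
    refine ⟨hup1, i, by omega, ?_⟩
    rw [Ew_single w i, hdown]
    simp [eps]
  have hset : setOf (Matched w') = setOf (Matched w) \ {i+1} := by
    ext q
    simp only [Set.mem_setOf_eq, Set.mem_diff, Set.mem_singleton_iff]
    exact hiff q
  have hfin : (setOf (Matched w)).Finite := matched_finite hL hR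
  have hd : defectW w' + 1 = defectW w := by
    rw [defect_eq', defect_eq', hset]
    exact Set.ncard_diff_singleton_add_one hm1 hfin
  have hofin := label_finite hL hR (l := WLabel.o) (by simp) (by simp)
  have hxfin := label_finite hL hR (l := WLabel.x) (by simp) (by simp)
  obtain ⟨h1, h2⟩ | ⟨h1, h2⟩ := hvar
  · have hOset : {p : ℤ | w' p = WLabel.o} = insert i {p : ℤ | w p = WLabel.o} := by
      ext z
      simp only [Set.mem_setOf_eq, Set.mem_insert_iff]
      by_cases hz1 : z = i
      · subst hz1; simp [h1, hdown]
      · by_cases hz2 : z = i+1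
        · subst hz2; simp [h2, hup1] <;> omega
        · rw [hout z hz1 hz2]; simp [hz1]
    have hXset : {p : ℤ | w' p = WLabel.x} = insert (i+1) {p : ℤ | w p = WLabel.x} := by
      ext z
      simp only [Set.mem_setOf_eq, Set.mem_insert_iff]
      by_cases hz1 : z = i
      · subst hz1; simp [h1, hdown] <;> omega
      · by_cases hz2 : z = i+1
        · subst hz2; simp [h2, hup1]
        · rw [hout z hz1 hz2]; simp [hz2]
    have ho : ({p : ℤ | w' p = WLabel.o}).ncard = ({p : ℤ | w p = WLabel.o}).ncard + 1 := by
      rw [hOset]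
      exact Set.ncard_insert_of_notMem (by simp [Set.mem_setOf_eq, hdown]) hofin
    have hx : ({p : ℤ | w' p = WLabel.x}).ncard = ({p : ℤ | w p = WLabel.x}).ncard + 1 := by
      rw [hXset]
      exact Set.ncard_insert_of_notMem (by simp [Set.mem_setOf_eq, hup1]) hxfin
    unfold kW
    rw [rkW_eq w', rkW_eq w, ho, hx, min_add_add_right]
    generalize min ({p : ℤ | w p = WLabel.o}).ncard ({p : ℤ | w p = WLabel.x}).ncard = m
    omega
  · have hOset : {p : ℤ | w' p = WLabel.o} = insert (i+1) {p : ℤ | w p = WLabel.o} := by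
      ext z
      simp only [Set.mem_setOf_eq, Set.mem_insert_iff]
      by_cases hz1 : z = i
      · subst hz1; simp [h1, hdown] <;> omega
      · by_cases hz2 : z = i+1
        · subst hz2; simp [h2, hup1]
        · rw [hout z hz1 hz2]; simp [hz2]
    have hXset : {p : ℤ | w' p = WLabel.x} = insert i {p : ℤ | w p = WLabel.x} := by
      ext z
      simp only [Set.mem_setOf_eq, Set.mem_insert_iff]
      by_cases hz1 : z = i
      · subst hz1; simp [h1, hdown]
      · by_cases hz2 : z = i+1
        · subst hz2; simp [h2, hup1] <;> omega
        · rw [hout z hz1 hz2]; simp [hz1]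
    have ho : ({p : ℤ | w' p = WLabel.o}).ncard = ({p : ℤ | w p = WLabel.o}).ncard + 1 := by
      rw [hOset]
      exact Set.ncard_insert_of_notMem (by simp [Set.mem_setOf_eq, hup1]) hofin
    have hx : ({p : ℤ | w' p = WLabel.x}).ncard = ({p : ℤ | w p = WLabel.x}).ncard + 1 := by
      rw [hXset]
      exact Set.ncard_insert_of_notMem (by simp [Set.mem_setOf_eq, hdown]) hxfin
    unfold kW
    rw [rkW_eq w', rkW_eq w, ho, hx, min_add_add_right]
    generalize min ({p : ℤ | w p = WLabel.o}).ncard ({p : ℤ | w p = WLabel.x}).ncard = m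
    omega

lemma kW_T3 {L R : ℤ} (hout : ∀ x, x ≠ i → x ≠ i+1 → w' x = w x)
    (hL : ∀ x, x < L → w x = .up) (hR : ∀ x, R < x → w x = .down)
    (hL' : ∀ x, x < L → w' x = .up) (hR' : ∀ x, R < x → w' x = .down)
    (hvar : (w i = .o ∧ w (i+1) = .x) ∨ (w i = .x ∧ w (i+1) = .o))
    (h'1 : w' i = .up) (h'2 : w' (i+1) = .down) :
    kW w' ≤ kW w ∧ (kW w' = kW w ∨ kW w' + 1 = kW w) := by
  have hepsi : eps (w i) = 0 := by rcases hvar with ⟨h, _⟩ | ⟨h, _⟩ <;> simp [h, eps]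
  have hepsi1 : eps (w (i+1)) = 0 := by rcases hvar with ⟨_, h⟩ | ⟨_, h⟩ <;> simp [h, eps]
  have hmv := Ew_move hout (by rw [h'1, hepsi]; simp [eps]) (by rw [h'2, hepsi1]; simp [eps])
  have hMsub : setOf (Matched w) ⊆ setOf (Matched w') := by
    intro q hq
    obtain ⟨h1, hex⟩ := hq
    have hq1 : q ≠ i := by
      intro h; subst h
      rcases hvar with ⟨h, _⟩ | ⟨h, _⟩ <;> rw [h] at h1 <;> simp at h1
    have hq2 : q ≠ i+1 := by
      intro h; subst h
      rcases hvar with ⟨_, h⟩ | ⟨_, h⟩ <;> rw [h] at h1 <;> simp at h1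
    exact ⟨by rw [hout q hq1 hq2]; exact h1, exA hmv hq2 hex⟩
  have hstruct : ∀ q, Matched w' q → ¬ Matched w q →
      q = i ∨ (i+1 < q ∧ w q = .up ∧ 0 ≤ Ew w (i+1) q ∧ ∀ p, p < q → Ew w p q ≤ 0) := by
    intro q hq hnq
    have hq2 : q ≠ i+1 := by
      intro h; subst h
      have := hq.1
      rw [h'2] at this
      simp at this
    by_cases hq1 : q = i
    · exact Or.inl hq1
    · right
      have hupq : w q = .up := by rw [← hout q hq1 hq2]; exact hq.1
      have hall : ∀ p, p < q → Ew w p q ≤ 0 := by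
        intro p hp
        by_contra hc
        exact hnq ⟨hupq, p, hp, by omega⟩
      obtain ⟨_, p, hp, hE⟩ := hq
      by_cases hpe : p = i+1
      · subst hpe
        have hm := hmv (i+1) q (le_of_lt hp)
        refine ⟨hp, hupq, by split_ifs at hm <;> omega, hall⟩
      · exfalso
        have hm := hmv p q (le_of_lt hp)
        have hcon : 1 ≤ Ew w p q := by split_ifs at hm <;> omega
        have := hall p hp
        omega
  have haux : ∀ q1 q2 : ℤ,
      (i+1 < q1 ∧ w q1 = .up ∧ 0 ≤ Ew w (i+1) q1 ∧ ∀ p, p < q1 → Ew w p q1 ≤ 0) →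
      (i+1 < q2 ∧ w q2 = .up ∧ 0 ≤ Ew w (i+1) q2 ∧ ∀ p, p < q2 → Ew w p q2 ≤ 0) →
      q1 < q2 → False := by
    rintro q1 q2 ⟨ha1, ha2, ha3, ha4⟩ ⟨hb1, hb2, hb3, hb4⟩ hlt
    have hs1 : Ew w (i+1) q2 = Ew w (i+1) (q1+1) + Ew w (q1+1) q2 :=
      Ew_split w (by omega) (by omega)
    have hs2 : Ew w (i+1) (q1+1) = Ew w (i+1) q1 + eps (w q1) := Ew_succ_right w (by omega)
    rw [ha2] at hs2
    simp [eps] at hs2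
    have he1 : Ew w (i+1) q1 ≤ 0 := ha4 (i+1) ha1
    rcases eq_or_lt_of_le (show q1+1 ≤ q2 by omega) with he | hlt2
    · have h0 : Ew w (q1+1) q2 = 0 := by rw [he, Ew_self]
      omega
    · have := hb4 (q1+1) hlt2
      omega
  have honeextra : ∀ q1 q2, Matched w' q1 → ¬ Matched w q1 → Matched w' q2 → ¬ Matched w q2 →
      q1 = q2 := by
    have hcross : ∀ q2, Matched w' i →
        (i+1 < q2 ∧ w q2 = .up ∧ 0 ≤ Ew w (i+1) q2 ∧ ∀ p, p < q2 → Ew w p q2 ≤ 0) → False := by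
      rintro q2 hmi ⟨hb1, hb2, hb3, hb4⟩
      obtain ⟨_, p0, hp0, hE0⟩ := hmi
      have hE0' : 1 ≤ Ew w p0 i := by
        have hm := hmv p0 i (le_of_lt hp0)
        split_ifs at hm <;> omega
      have hs : Ew w p0 q2 = Ew w p0 i + Ew w i q2 := Ew_split w (le_of_lt hp0) (by omega)
      have hs2 : Ew w i q2 = eps (w i) + Ew w (i+1) q2 := Ew_succ_left w (by omega)
      rw [hepsi] at hs2
      have := hb4 p0 (by omega)
      omega
    intro q1 q2 h1 h2 h3 h4
    rcases hstruct q1 h1 h2 with hA | hA <;> rcases hstruct q2 h3 h4 with hB | hB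
    · rw [hA, hB]
    · exact ((hcross q2 (hA ▸ h1) hB)).elim
    · exact ((hcross q1 (hB ▸ h3) hA)).elim
    · rcases lt_trichotomy q1 q2 with h | h | h
      · exact (haux q1 q2 hA hB h).elim
      · exact h
      · exact (haux q2 q1 hB hA h).elim
  have hfin : (setOf (Matched w)).Finite := matched_finite hL hR
  have hfin' : (setOf (Matched w')).Finite := matched_finite hL' hR'
  have hdle : defectW w ≤ defectW w' := by
    rw [defect_eq', defect_eq']
    exact Set.ncard_le_ncard hMsub hfin'
  have hdge : defectW w' ≤ defectW w + 1 := by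
    rw [defect_eq', defect_eq']
    have hsub1 : (setOf (Matched w') \ setOf (Matched w)).ncard ≤ 1 := by
      rcases Set.eq_empty_or_nonempty (setOf (Matched w') \ setOf (Matched w)) with he | ⟨a, ha⟩
      · rw [he]; simp
      · have hsingle : setOf (Matched w') \ setOf (Matched w) = {a} := by
          ext b
          simp only [Set.mem_diff, Set.mem_setOf_eq, Set.mem_singleton_iff]
          constructor
          · rintro ⟨hb1, hb2⟩
            exact honeextra b a hb1 hb2 ha.1 ha.2
          · rintro rfl
            exact ⟨ha.1, ha.2⟩
        rw [hsingle]
        simp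
    have hu := Set.ncard_union_le (setOf (Matched w)) (setOf (Matched w') \ setOf (Matched w))
    rw [Set.union_diff_cancel hMsub] at hu
    omega
  have hofin' := label_finite hL' hR' (l := WLabel.o) (by simp) (by simp)
  have hxfin' := label_finite hL' hR' (l := WLabel.x) (by simp) (by simp)
  have hrk : rkW w = rkW w' + 1 := by
    obtain ⟨h1, h2⟩ | ⟨h1, h2⟩ := hvar
    · have hOset : {p : ℤ | w p = WLabel.o} = insert i {p : ℤ | w' p = WLabel.o} := by
        ext z
        simp only [Set.mem_setOf_eq, Set.mem_insert_iff]
        by_cases hz1 : z = i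
        · subst hz1; simp [h1]
        · by_cases hz2 : z = i+1
          · subst hz2; simp [h2, h'2] <;> omega
          · rw [← hout z hz1 hz2]; simp [hz1]
      have hXset : {p : ℤ | w p = WLabel.x} = insert (i+1) {p : ℤ | w' p = WLabel.x} := by
        ext z
        simp only [Set.mem_setOf_eq, Set.mem_insert_iff]
        by_cases hz1 : z = i
        · subst hz1; simp [h1, h'1] <;> omega
        · by_cases hz2 : z = i+1
          · subst hz2; simp [h2]
          · rw [← hout z hz1 hz2]; simp [hz2]
      have ho : ({p : ℤ | w p = WLabel.o}).ncard = ({p : ℤ | w' p = WLabel.o}).ncard + 1 := by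
        rw [hOset]
        exact Set.ncard_insert_of_notMem (by simp [Set.mem_setOf_eq, h'1]) hofin'
      have hx : ({p : ℤ | w p = WLabel.x}).ncard = ({p : ℤ | w' p = WLabel.x}).ncard + 1 := by
        rw [hXset]
        exact Set.ncard_insert_of_notMem (by simp [Set.mem_setOf_eq, h'2]) hxfin'
      rw [rkW_eq w', rkW_eq w, ho, hx, min_add_add_right]
    · have hOset : {p : ℤ | w p = WLabel.o} = insert (i+1) {p : ℤ | w' p = WLabel.o} := by
        ext z
        simp only [Set.mem_setOf_eq, Set.mem_insert_iff]
        by_cases hz1 : z = i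
        · subst hz1; simp [h1, h'1] <;> omega
        · by_cases hz2 : z = i+1
          · subst hz2; simp [h2]
          · rw [← hout z hz1 hz2]; simp [hz2]
      have hXset : {p : ℤ | w p = WLabel.x} = insert i {p : ℤ | w' p = WLabel.x} := by
        ext z
        simp only [Set.mem_setOf_eq, Set.mem_insert_iff]
        by_cases hz1 : z = i
        · subst hz1; simp [h1]
        · by_cases hz2 : z = i+1
          · subst hz2; simp [h2, h'2] <;> omega
          · rw [← hout z hz1 hz2]; simp [hz1]
      have ho : ({p : ℤ | w p = WLabel.o}).ncard = ({p : ℤ | w' p = WLabel.o}).ncard + 1 := by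
        rw [hOset]
        exact Set.ncard_insert_of_notMem (by simp [Set.mem_setOf_eq, h'2]) hofin'
      have hx : ({p : ℤ | w p = WLabel.x}).ncard = ({p : ℤ | w' p = WLabel.x}).ncard + 1 := by
        rw [hXset]
        exact Set.ncard_insert_of_notMem (by simp [Set.mem_setOf_eq, h'1]) hxfin'
      rw [rkW_eq w', rkW_eq w, ho, hx, min_add_add_right]
  have hrk1 : 1 ≤ rkW w := by omega
  unfold kW
  omega

end Moves

section Assembly

lemma part_anti {f : ℕ → ℕ} (hf : IsPartitionFun f) {k l : ℕ} (h : k ≤ l) :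
    (f l : ℤ) - l ≤ (f k : ℤ) - k := by
  have h1 := hf.1 k l h
  have h2 : (k:ℤ) ≤ l := by exact_mod_cast h
  have h3 : (f l : ℤ) ≤ f k := by exact_mod_cast h1
  omega

lemma part_strictAnti {f : ℕ → ℕ} (hf : IsPartitionFun f) {k l : ℕ} (h : k < l) :
    (f l : ℤ) - l < (f k : ℤ) - k := by
  have h1 := hf.1 k l (le_of_lt h)
  have h2 : (k:ℤ) < l := by exact_mod_cast h
  have h3 : (f l : ℤ) ≤ f k := by exact_mod_cast h1
  omega

lemma wedge_inj {f : ℕ → ℕ} (hf : IsPartitionFun f) {k l : ℕ}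
    (h : (f k : ℤ) - k = (f l : ℤ) - l) : k = l := by
  rcases lt_trichotomy k l with hh | hh | hh
  · have := part_strictAnti hf hh; omega
  · exact hh
  · have := part_strictAnti hf hh; omega

lemma vee_mono {g : ℕ → ℕ} (hg : IsPartitionFun g) {k l : ℕ} (h : k ≤ l) (δ : ℤ) :
    (k:ℤ)+1-δ-(g k : ℤ) ≤ (l:ℤ)+1-δ-(g l : ℤ) := by
  have h1 := hg.1 k l h
  have h2 : (k:ℤ) ≤ l := by exact_mod_cast h
  have h3 : (g l : ℤ) ≤ g k := by exact_mod_cast h1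
  omega

lemma vee_strict {g : ℕ → ℕ} (hg : IsPartitionFun g) {k l : ℕ} (h : k < l) (δ : ℤ) :
    (k:ℤ)+1-δ-(g k : ℤ) < (l:ℤ)+1-δ-(g l : ℤ) := by
  have h1 := hg.1 k l (le_of_lt h)
  have h2 : (k:ℤ) < l := by exact_mod_cast h
  have h3 : (g l : ℤ) ≤ g k := by exact_mod_cast h1
  omega

lemma vee_inj {g : ℕ → ℕ} (hg : IsPartitionFun g) {k l : ℕ} (δ : ℤ)
    (h : (k:ℤ)+1-δ-(g k : ℤ) = (l:ℤ)+1-δ-(g l : ℤ)) : k = l := by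
  rcases lt_trichotomy k l with hh | hh | hh
  · have := vee_strict hg hh δ; omega
  · exact hh
  · have := vee_strict hg hh δ; omega

lemma far_low (f g : ℕ → ℕ) (δ : ℤ) (hf : IsPartitionFun f) (hg : IsPartitionFun g) :
    ∃ L : ℤ, ∀ x, x < L → weightLabel f g δ x = .up := by
  obtain ⟨N, hN⟩ := hf.2
  refine ⟨min (-(N:ℤ)) (1 - δ - (g 0 : ℤ)), fun x hx => ?_⟩
  rw [lt_min_iff] at hx
  have hw : inWedgeSet f x := by
    refine ⟨(-x).toNat, ?_⟩
    have h2 : (((-x).toNat : ℕ) : ℤ) = -x := Int.toNat_of_nonneg (by omega)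
    have h3 : N ≤ (-x).toNat := by omega
    rw [hN _ h3]
    push_cast
    omega
  have hv : ¬ inVeeSet g δ x := by
    rintro ⟨k, hk⟩
    have h1 : (g k : ℤ) ≤ (g 0 : ℤ) := by exact_mod_cast hg.1 0 k (Nat.zero_le k)
    have h2 : (0:ℤ) ≤ k := Int.natCast_nonneg k
    omega
  unfold weightLabel
  rw [if_pos hw, if_neg hv]

lemma far_high (f g : ℕ → ℕ) (δ : ℤ) (hf : IsPartitionFun f) (hg : IsPartitionFun g) :
    ∃ R : ℤ, ∀ x, R < x → weightLabel f g δ x = .down := by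
  obtain ⟨N, hN⟩ := hg.2
  refine ⟨max ((f 0 : ℤ)) ((N:ℤ) + 1 - δ), fun x hx => ?_⟩
  rw [max_lt_iff] at hx
  have hv : inVeeSet g δ x := by
    refine ⟨(x - 1 + δ).toNat, ?_⟩
    have h2 : (((x - 1 + δ).toNat : ℕ) : ℤ) = x - 1 + δ := Int.toNat_of_nonneg (by omega)
    have h3 : N ≤ (x - 1 + δ).toNat := by omega
    rw [hN _ h3]
    push_cast
    omega
  have hw : ¬ inWedgeSet f x := by
    rintro ⟨k, hk⟩
    have h1 : (f k : ℤ) ≤ (f 0 : ℤ) := by exact_mod_cast hf.1 0 k (Nat.zero_le k)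
    have h2 : (0:ℤ) ≤ k := Int.natCast_nonneg k
    omega
  unfold weightLabel
  rw [if_neg hw, if_pos hv]

end Assembly

end KRB

/-- if the bipartition `μ = (f', g')` is obtained from
`λ = (f, g)` by removing one box (from either constituent), then
`k(μ) ≤ k(λ)`, and moreover `k(μ) = k(λ)` or `k(μ) = k(λ) − 1`, where `k` is
the defect-plus-rank statistic on the associated weight diagrams. -/

theorem kval_removeBox (δ : ℤ) (f g f' g' : ℕ → ℕ)
    (hf : IsPartitionFun f) (hg : IsPartitionFun g)
    (hf' : IsPartitionFun f') (hg' : IsPartitionFun g')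
    (hrem : (RemovesBox f f' ∧ g' = g) ∨ (f' = f ∧ RemovesBox g g')) :
    kW (weightLabel f' g' δ) ≤ kW (weightLabel f g δ) ∧
      (kW (weightLabel f' g' δ) = kW (weightLabel f g δ) ∨
        kW (weightLabel f' g' δ) + 1 = kW (weightLabel f g δ)) := by
  obtain ⟨L1, hL1⟩ := KRB.far_low f g δ hf hg
  obtain ⟨L2, hL2⟩ := KRB.far_low f' g' δ hf' hg'
  obtain ⟨R1, hR1⟩ := KRB.far_high f g δ hf hg
  obtain ⟨R2, hR2⟩ := KRB.far_high f' g' δ hf' hg'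
  have hLl : min L1 L2 ≤ L1 := min_le_left _ _
  have hLr : min L1 L2 ≤ L2 := min_le_right _ _
  have hRl : R1 ≤ max R1 R2 := le_max_left _ _
  have hRr : R2 ≤ max R1 R2 := le_max_right _ _
  have hLw : ∀ x, x < min L1 L2 → weightLabel f g δ x = .up :=
    fun x hx => hL1 x (lt_of_lt_of_le hx hLl)
  have hLw' : ∀ x, x < min L1 L2 → weightLabel f' g' δ x = .up :=
    fun x hx => hL2 x (lt_of_lt_of_le hx hLr)
  have hRw : ∀ x, max R1 R2 < x → weightLabel f g δ x = .down :=
    fun x hx => hR1 x (lt_of_le_of_lt hRl hx)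
  have hRw' : ∀ x, max R1 R2 < x → weightLabel f' g' δ x = .down :=
    fun x hx => hR2 x (lt_of_le_of_lt hRr hx)
  rcases hrem with ⟨⟨j, hj, hoth⟩, rfl⟩ | ⟨rfl, ⟨j, hj, hoth⟩⟩
  · -- box removed from f
    have hji : (f' j : ℤ) + 1 = (f j : ℤ) := by exact_mod_cast hj
    set i : ℤ := (f j : ℤ) - (j:ℤ) - 1 with hidef
    have hstep : (f (j+1) : ℤ) ≤ (f j : ℤ) - 1 := by
      have e1 : f' (j+1) = f (j+1) := hoth (j+1) (by omega)
      have e2 : f' (j+1) ≤ f' j := hf'.1 j (j+1) (by omega)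
      have e3 : f (j+1) ≤ f' j := by omega
      have e4 : (f (j+1) : ℤ) ≤ (f' j : ℤ) := by exact_mod_cast e3
      omega
    have hw_i1 : inWedgeSet f (i+1) := ⟨j, by omega⟩
    have hw_i : ¬ inWedgeSet f i := by
      rintro ⟨k, hk⟩
      rcases lt_trichotomy k j with h | h | h
      · have := KRB.part_strictAnti hf h
        omega
      · subst h; omega
      · have h5 := KRB.part_anti hf (show j+1 ≤ k by omega)
        push_cast at h5
        omega
    have hw'_i : inWedgeSet f' i := ⟨j, by omega⟩
    have hw'_i1 : ¬ inWedgeSet f' (i+1) := by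
      rintro ⟨k, hk⟩
      by_cases hkj : k = j
      · subst hkj; omega
      · have e : (f' k : ℤ) = f k := by exact_mod_cast hoth k hkj
        exact hkj (KRB.wedge_inj hf (show (f k : ℤ) - k = (f j : ℤ) - j by omega))
    have hout : ∀ x : ℤ, x ≠ i → x ≠ i+1 → weightLabel f' g' δ x = weightLabel f g' δ x := by
      intro x hx1 hx2
      have hwoff : inWedgeSet f' x ↔ inWedgeSet f x := by
        constructor
        · rintro ⟨k, hk⟩
          by_cases hkj : k = j
          · subst hkj; exact absurd (by omega : x = i) hx1
          · have e : (f' k : ℤ) = f k := by exact_mod_cast hoth k hkj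
            exact ⟨k, by omega⟩
        · rintro ⟨k, hk⟩
          by_cases hkj : k = j
          · subst hkj; exact absurd (by omega : x = i+1) hx2
          · have e : (f' k : ℤ) = f k := by exact_mod_cast hoth k hkj
            exact ⟨k, by omega⟩
      unfold weightLabel
      rw [if_congr hwoff rfl rfl]
    by_cases hv1 : inVeeSet g' δ i <;> by_cases hv2 : inVeeSet g' δ (i+1)
    · -- (down, x) -> (x, down) : T2
      have hdown : weightLabel f g' δ i = .down := by
        unfold weightLabel; rw [if_neg hw_i, if_pos hv1]
      have hb : weightLabel f g' δ (i+1) = .x := by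
        unfold weightLabel; rw [if_pos hw_i1, if_pos hv2]
      have ha : weightLabel f' g' δ i = .x := by
        unfold weightLabel; rw [if_pos hw'_i, if_pos hv1]
      have h'2 : weightLabel f' g' δ (i+1) = .down := by
        unfold weightLabel; rw [if_neg hw'_i1, if_pos hv2]
      have hk := KRB.kW_T2 hout hdown (Or.inr hb) (by rw [ha, hb]) h'2
      exact ⟨le_of_eq hk, Or.inl hk⟩
    · -- (down, up) -> (x, o) : T4
      have hdown : weightLabel f g' δ i = .down := by
        unfold weightLabel; rw [if_neg hw_i, if_pos hv1]
      have hup1 : weightLabel f g' δ (i+1) = .up := by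
        unfold weightLabel; rw [if_pos hw_i1, if_neg hv2]
      have ha : weightLabel f' g' δ i = .x := by
        unfold weightLabel; rw [if_pos hw'_i, if_pos hv1]
      have hb : weightLabel f' g' δ (i+1) = .o := by
        unfold weightLabel; rw [if_neg hw'_i1, if_neg hv2]
      have hk := KRB.kW_T4 hout hLw hRw hdown hup1 (Or.inr ⟨ha, hb⟩)
      exact ⟨le_of_eq hk, Or.inl hk⟩
    · -- (o, x) -> (up, down) : T3
      have h1 : weightLabel f g' δ i = .o := by
        unfold weightLabel; rw [if_neg hw_i, if_neg hv1]
      have h2 : weightLabel f g' δ (i+1) = .x := by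
        unfold weightLabel; rw [if_pos hw_i1, if_pos hv2]
      have h'1 : weightLabel f' g' δ i = .up := by
        unfold weightLabel; rw [if_pos hw'_i, if_neg hv1]
      have h'2 : weightLabel f' g' δ (i+1) = .down := by
        unfold weightLabel; rw [if_neg hw'_i1, if_pos hv2]
      exact KRB.kW_T3 hout hLw hRw hLw' hRw' (Or.inl ⟨h1, h2⟩) h'1 h'2
    · -- (o, up) -> (up, o) : T1
      have h1 : weightLabel f g' δ i = .o := by
        unfold weightLabel; rw [if_neg hw_i, if_neg hv1]
      have hup1 : weightLabel f g' δ (i+1) = .up := by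
        unfold weightLabel; rw [if_pos hw_i1, if_neg hv2]
      have h'1 : weightLabel f' g' δ i = .up := by
        unfold weightLabel; rw [if_pos hw'_i, if_neg hv1]
      have h'2o : weightLabel f' g' δ (i+1) = .o := by
        unfold weightLabel; rw [if_neg hw'_i1, if_neg hv2]
      have hk := KRB.kW_T1 hout (Or.inl h1) hup1 h'1 (by rw [h'2o, h1])
      exact ⟨le_of_eq hk, Or.inl hk⟩
  · -- box removed from g
    have hji : (g' j : ℤ) + 1 = (g j : ℤ) := by exact_mod_cast hj
    set i : ℤ := (j:ℤ) + 1 - δ - (g j : ℤ) with hidef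
    have hstep : (g (j+1) : ℤ) ≤ (g j : ℤ) - 1 := by
      have e1 : g' (j+1) = g (j+1) := hoth (j+1) (by omega)
      have e2 : g' (j+1) ≤ g' j := hg'.1 j (j+1) (by omega)
      have e3 : g (j+1) ≤ g' j := by omega
      have e4 : (g (j+1) : ℤ) ≤ (g' j : ℤ) := by exact_mod_cast e3
      omega
    have hv_i : inVeeSet g δ i := ⟨j, by omega⟩
    have hv_i1 : ¬ inVeeSet g δ (i+1) := by
      rintro ⟨k, hk⟩
      rcases lt_trichotomy k j with h | h | h
      · have := KRB.vee_strict hg h δ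
        omega
      · subst h; omega
      · have h5 := KRB.vee_mono hg (show j+1 ≤ k by omega) δ
        push_cast at h5
        omega
    have hv'_i1 : inVeeSet g' δ (i+1) := ⟨j, by omega⟩
    have hv'_i : ¬ inVeeSet g' δ i := by
      rintro ⟨k, hk⟩
      by_cases hkj : k = j
      · subst hkj; omega
      · have e : (g' k : ℤ) = g k := by exact_mod_cast hoth k hkj
        exact hkj (KRB.vee_inj hg δ
          (show (k:ℤ)+1-δ-(g k : ℤ) = (j:ℤ)+1-δ-(g j : ℤ) by omega))
    have hout : ∀ x : ℤ, x ≠ i → x ≠ i+1 → weightLabel f' g' δ x = weightLabel f' g δ x := by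
      intro x hx1 hx2
      have hvoff : inVeeSet g' δ x ↔ inVeeSet g δ x := by
        constructor
        · rintro ⟨k, hk⟩
          by_cases hkj : k = j
          · subst hkj; exact absurd (by omega : x = i+1) hx2
          · have e : (g' k : ℤ) = g k := by exact_mod_cast hoth k hkj
            exact ⟨k, by omega⟩
        · rintro ⟨k, hk⟩
          by_cases hkj : k = j
          · subst hkj; exact absurd (by omega : x = i) hx1
          · have e : (g' k : ℤ) = g k := by exact_mod_cast hoth k hkj
            exact ⟨k, by omega⟩
      unfold weightLabel
      rw [if_congr Iff.rfl (if_congr hvoff rfl rfl) (if_congr hvoff rfl rfl)]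
    by_cases hw1 : inWedgeSet f' i <;> by_cases hw2 : inWedgeSet f' (i+1)
    · -- (x, up) -> (up, x): T1
      have h1 : weightLabel f' g δ i = .x := by
        unfold weightLabel; rw [if_pos hw1, if_pos hv_i]
      have hup1 : weightLabel f' g δ (i+1) = .up := by
        unfold weightLabel; rw [if_pos hw2, if_neg hv_i1]
      have h'1 : weightLabel f' g' δ i = .up := by
        unfold weightLabel; rw [if_pos hw1, if_neg hv'_i]
      have h'2x : weightLabel f' g' δ (i+1) = .x := by
        unfold weightLabel; rw [if_pos hw2, if_pos hv'_i1]
      have hk := KRB.kW_T1 hout (Or.inr h1) hup1 h'1 (by rw [h'2x, h1])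
      exact ⟨le_of_eq hk, Or.inl hk⟩
    · -- (x, o) -> (up, down): T3
      have h1 : weightLabel f' g δ i = .x := by
        unfold weightLabel; rw [if_pos hw1, if_pos hv_i]
      have h2 : weightLabel f' g δ (i+1) = .o := by
        unfold weightLabel; rw [if_neg hw2, if_neg hv_i1]
      have h'1 : weightLabel f' g' δ i = .up := by
        unfold weightLabel; rw [if_pos hw1, if_neg hv'_i]
      have h'2 : weightLabel f' g' δ (i+1) = .down := by
        unfold weightLabel; rw [if_neg hw2, if_pos hv'_i1]
      exact KRB.kW_T3 hout hLw hRw hLw' hRw' (Or.inr ⟨h1, h2⟩) h'1 h'2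
    · -- (down, up) -> (o, x): T4
      have hdown : weightLabel f' g δ i = .down := by
        unfold weightLabel; rw [if_neg hw1, if_pos hv_i]
      have hup1 : weightLabel f' g δ (i+1) = .up := by
        unfold weightLabel; rw [if_pos hw2, if_neg hv_i1]
      have ha : weightLabel f' g' δ i = .o := by
        unfold weightLabel; rw [if_neg hw1, if_neg hv'_i]
      have hb : weightLabel f' g' δ (i+1) = .x := by
        unfold weightLabel; rw [if_pos hw2, if_pos hv'_i1]
      have hk := KRB.kW_T4 hout hLw hRw hdown hup1 (Or.inl ⟨ha, hb⟩)
      exact ⟨le_of_eq hk, Or.inl hk⟩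
    · -- (down, o) -> (o, down): T2
      have hdown : weightLabel f' g δ i = .down := by
        unfold weightLabel; rw [if_neg hw1, if_pos hv_i]
      have hb : weightLabel f' g δ (i+1) = .o := by
        unfold weightLabel; rw [if_neg hw2, if_neg hv_i1]
      have ha : weightLabel f' g' δ i = .o := by
        unfold weightLabel; rw [if_neg hw1, if_neg hv'_i]
      have h'2 : weightLabel f' g' δ (i+1) = .down := by
        unfold weightLabel; rw [if_neg hw2, if_pos hv'_i1]
      have hk := KRB.kW_T2 hout hdown (Or.inl hb) (by rw [ha, hb]) h'2
      exact ⟨le_of_eq hk, Or.inl hk⟩
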